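/- The function C_i(t) := t · ₂F₁(3/4, 3/4; 3/2; 4t²) / ₂F₁(1/4, 1/4; 1/2; 4t²) is well-defined and holomorphic on the disc |t| < 1/2, and satisfies C_i(0) = 0. -/

import Mathlib

open Complex

/-- The Gaussian hypergeometric series. -/
noncomputable def hyp2F1 (a b c z : ℂ) : ℂ :=
  ∑' n : ℕ, (ascPochhammer ℂ n).eval a * (ascPochhammer ℂ n).eval b /
    ((ascPochhammer ℂ n).eval c * (n.factorial : ℂ)) * z ^ n

/-- `C_i(t) = t · ₂F₁(3/4,3/4;3/2;4t²)/₂F₁(1/4,1/4;1/2;4t²)`. -/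
noncomputable def Ci (t : ℂ) : ℂ :=
  t * hyp2F1 (3/4) (3/4) (3/2) (4 * t ^ 2) / hyp2F1 (1/4) (1/4) (1/2) (4 * t ^ 2)

/-!
The denominator does not vanish by an Eneström–Kakeya argument: the coefficients `c n` of
`₂F₁(1/4,1/4;1/2;z)` are positive and decrease from `c 0 = 1` (their ratio is
`(n+1/4)² / ((n+1/2)(n+1)) ≤ 1`), so `(1 - z) ₂F₁(z) = 1 - ∑ (c n - c (n+1)) z^(n+1)`, where the
sum has norm at most `|z| ∑ (c n - c (n+1)) ≤ |z| < 1`. Both series have radius of convergence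
`1`, and `t ↦ 4t²` maps the disc `|t| < 1/2` into the unit disc.
-/

theorem one_sub_mul_tsum_mul_pow {R : Type*} [NormedCommRing R] {c : ℕ → R} {z : R}
    (hc : Summable fun n => c n * z ^ n) :
    (1 - z) * ∑' n, c n * z ^ n = c 0 - ∑' n, (c n - c (n + 1)) * z ^ (n + 1) := by
  have hshift : Summable fun n => c n * z ^ (n + 1) :=
    (hc.mul_left z).congr fun n => by ring
  have htail : Summable fun n => c (n + 1) * z ^ (n + 1) :=
    (summable_nat_add_iff (f := fun n => c n * z ^ n) 1).mpr hc
  have hmul : z * ∑' n, c n * z ^ n = ∑' n, c n * z ^ (n + 1) := by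
    rw [← hc.tsum_mul_left]
    exact tsum_congr fun n => by ring
  have hdiff : ∑' n, (c n - c (n + 1)) * z ^ (n + 1) =
      ∑' n, c n * z ^ (n + 1) - ∑' n, c (n + 1) * z ^ (n + 1) := by
    rw [← hshift.tsum_sub htail]
    exact tsum_congr fun n => sub_mul _ _ _
  rw [sub_mul, one_mul, hmul, hdiff, hc.tsum_eq_zero_add, pow_zero, mul_one]
  abel

theorem norm_tsum_sub_succ_mul_pow_le {f : ℕ → ℝ} (hf : Antitone f) (hnn : ∀ n, 0 ≤ f n)
    {z : ℂ} (hz : ‖z‖ ≤ 1) :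
    ‖∑' n, ((f n : ℂ) - f (n + 1)) * z ^ (n + 1)‖ ≤ f 0 * ‖z‖ := by
  have hgap : ∀ n, 0 ≤ f n - f (n + 1) := fun n => sub_nonneg.2 (hf n.le_succ)
  have hpartial : ∀ n, ∑ i ∈ Finset.range n, (f i - f (i + 1)) ≤ f 0 := fun n => by
    rw [Finset.sum_range_sub']
    linarith [hnn n]
  have hterm : ∀ n, ‖((f n : ℂ) - f (n + 1)) * z ^ (n + 1)‖ ≤ (f n - f (n + 1)) * ‖z‖ := by
    intro n
    rw [norm_mul, ← ofReal_sub, norm_real, Real.norm_of_nonneg (hgap n), norm_pow, pow_succ]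
    exact mul_le_mul_of_nonneg_left
      (mul_le_of_le_one_left (norm_nonneg z) (pow_le_one₀ (norm_nonneg z) hz)) (hgap n)
  have hgap_sum : Summable fun n => (f n - f (n + 1)) * ‖z‖ :=
    (summable_of_sum_range_le hgap hpartial).mul_right _
  calc ‖∑' n, ((f n : ℂ) - f (n + 1)) * z ^ (n + 1)‖
      ≤ ∑' n, (f n - f (n + 1)) * ‖z‖ :=
        tsum_of_norm_bounded hgap_sum.hasSum hterm
    _ = (∑' n, (f n - f (n + 1))) * ‖z‖ := tsum_mul_right
    _ ≤ f 0 * ‖z‖ := by gcongr; exact Real.tsum_le_of_sum_range_le hgap hpartial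

theorem tsum_ofReal_mul_pow_ne_zero_of_antitone {f : ℕ → ℝ} (hf : Antitone f)
    (hnn : ∀ n, 0 ≤ f n) (h0 : 0 < f 0) {z : ℂ} (hz : ‖z‖ < 1) :
    ∑' n, (f n : ℂ) * z ^ n ≠ 0 := by
  have hsum : Summable fun n => (f n : ℂ) * z ^ n := by
    refine .of_norm_bounded ((summable_geometric_of_lt_one (norm_nonneg z) hz).mul_left (f 0))
      fun n => ?_
    rw [norm_mul, norm_pow, norm_real, Real.norm_of_nonneg (hnn n)]
    exact mul_le_mul_of_nonneg_right (hf n.zero_le) (by positivity)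
  intro hzero
  have key := one_sub_mul_tsum_mul_pow hsum
  rw [hzero, mul_zero, eq_comm, sub_eq_zero] at key
  have hbound := norm_tsum_sub_succ_mul_pow_le hf hnn hz.le
  rw [← key, norm_real, Real.norm_of_nonneg h0.le] at hbound
  nlinarith

theorem map_ascPochhammer_eval {S T : Type*} [Semiring S] [Semiring T] (f : S →+* T) (n : ℕ)
    (s : S) : f ((ascPochhammer S n).eval s) = (ascPochhammer T n).eval (f s) := by
  rw [ascPochhammer_eval₂ f, Polynomial.eval₂_at_apply]

theorem map_ordinaryHypergeometricCoefficient {𝕂 𝕃 : Type*} [Field 𝕂] [Field 𝕃] (f : 𝕂 →+* 𝕃)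
    (a b c : 𝕂) (n : ℕ) :
    f (ordinaryHypergeometricCoefficient a b c n) =
      ordinaryHypergeometricCoefficient (f a) (f b) (f c) n := by
  simp only [ordinaryHypergeometricCoefficient, map_mul, map_inv₀, map_natCast,
    map_ascPochhammer_eval]

theorem ordinaryHypergeometricCoefficient_succ {𝕂 : Type*} [Field 𝕂] (a b c : 𝕂) (n : ℕ) :
    ordinaryHypergeometricCoefficient a b c (n + 1) =
      ordinaryHypergeometricCoefficient a b c n * ((a + n) * (b + n) / ((c + n) * (n + 1))) := by
  simp only [ordinaryHypergeometricCoefficient, ascPochhammer_succ_eval, Nat.factorial_succ,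
    Nat.cast_mul, Nat.cast_add_one, div_eq_mul_inv, mul_inv]
  ring

theorem ordinaryHypergeometricCoefficient_pos {a b c : ℝ} (ha : 0 < a) (hb : 0 < b) (hc : 0 < c)
    (n : ℕ) : 0 < ordinaryHypergeometricCoefficient a b c n := by
  have := ascPochhammer_pos n a ha
  have := ascPochhammer_pos n b hb
  have := ascPochhammer_pos n c hc
  positivity

theorem antitone_ordinaryHypergeometricCoefficient {a b c : ℝ} (ha : 0 < a) (hb : 0 < b)
    (hc : 0 < c) (hab : a * b ≤ c) (habc : a + b ≤ c + 1) :
    Antitone (ordinaryHypergeometricCoefficient a b c) := by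
  refine antitone_nat_of_succ_le fun n => ?_
  have hn : (0 : ℝ) ≤ n := n.cast_nonneg
  have hratio : (a + n) * (b + n) / ((c + n) * (n + 1)) ≤ 1 := by
    rw [div_le_one (by positivity)]
    nlinarith
  rw [ordinaryHypergeometricCoefficient_succ]
  exact mul_le_of_le_one_right (ordinaryHypergeometricCoefficient_pos ha hb hc n).le hratio

theorem ordinaryHypergeometric_ofReal_ne_zero {a b c : ℝ} (ha : 0 < a) (hb : 0 < b) (hc : 0 < c)
    (hab : a * b ≤ c) (habc : a + b ≤ c + 1) {z : ℂ} (hz : ‖z‖ < 1) :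
    ₂F₁ (a : ℂ) b c z ≠ 0 := by
  have hcoef : ∀ n, ordinaryHypergeometricCoefficient (a : ℂ) b c n =
      ((ordinaryHypergeometricCoefficient a b c n : ℝ) : ℂ) := fun n =>
    (map_ordinaryHypergeometricCoefficient ofRealHom a b c n).symm
  rw [ordinaryHypergeometric_eq_tsum]
  simp only [smul_eq_mul, hcoef]
  refine tsum_ofReal_mul_pow_ne_zero_of_antitone
    (antitone_ordinaryHypergeometricCoefficient ha hb hc hab habc)
    (fun n => (ordinaryHypergeometricCoefficient_pos ha hb hc n).le) ?_ hz
  simp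

theorem differentiableOn_ordinaryHypergeometric {𝕂 𝔸 : Type*} [RCLike 𝕂] [NormedDivisionRing 𝔸]
    [NormedAlgebra 𝕂 𝔸] [CompleteSpace 𝔸] (a b c : 𝕂)
    (habc : ∀ kn : ℕ, (kn : 𝕂) ≠ -a ∧ (kn : 𝕂) ≠ -b ∧ (kn : 𝕂) ≠ -c) :
    DifferentiableOn 𝕂 (₂F₁ a b c : 𝔸 → 𝔸) (Metric.ball 0 1) := by
  have hr := ordinaryHypergeometricSeries_radius_eq_one 𝔸 a b c habc
  have h := ((ordinaryHypergeometricSeries 𝔸 a b c).hasFPowerSeriesOnBall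
    (by simp [hr])).differentiableOn
  rw [hr, ← ENNReal.coe_one, Metric.eball_coe, NNReal.coe_one] at h
  exact h

theorem natCast_ne_neg_of_re_pos {a : ℂ} (ha : 0 < a.re) (k : ℕ) : (k : ℂ) ≠ -a := by
  intro h
  have hre : (k : ℝ) = -a.re := by simpa using congrArg re h
  linarith [k.cast_nonneg (α := ℝ)]

theorem hyp2F1_eq_ordinaryHypergeometric (a b c z : ℂ) : hyp2F1 a b c z = ₂F₁ a b c z := by
  rw [hyp2F1, ordinaryHypergeometric_eq_tsum]
  refine tsum_congr fun n => ?_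
  rw [smul_eq_mul, div_eq_mul_inv, mul_inv]
  ring

theorem differentiableOn_hyp2F1 {a b c : ℂ} (ha : 0 < a.re) (hb : 0 < b.re) (hc : 0 < c.re) :
    DifferentiableOn ℂ (hyp2F1 a b c) (Metric.ball 0 1) :=
  (differentiableOn_ordinaryHypergeometric a b c fun k =>
    ⟨natCast_ne_neg_of_re_pos ha k, natCast_ne_neg_of_re_pos hb k,
      natCast_ne_neg_of_re_pos hc k⟩).congr fun z _ => hyp2F1_eq_ordinaryHypergeometric a b c z

/-- `C_i` is well-defined (denominator nonvanishing) and holomorphic on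
`|t| < 1/2`, with `C_i(0) = 0`. -/
theorem stmt_3 :
    (∀ t ∈ Metric.ball (0 : ℂ) (1/2),
      hyp2F1 (1/4) (1/4) (1/2) (4 * t ^ 2) ≠ 0) ∧
    DifferentiableOn ℂ Ci (Metric.ball (0 : ℂ) (1/2)) ∧
    Ci 0 = 0 := by
  have hmaps : Set.MapsTo (fun t : ℂ => 4 * t ^ 2) (Metric.ball 0 (1/2)) (Metric.ball 0 1) := by
    intro t ht
    rw [mem_ball_zero_iff] at ht ⊢
    rw [norm_mul, norm_pow, RCLike.norm_ofNat]
    nlinarith [norm_nonneg t]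
  have hden : ∀ t ∈ Metric.ball (0 : ℂ) (1/2), hyp2F1 (1/4) (1/4) (1/2) (4 * t ^ 2) ≠ 0 := by
    intro t ht
    have := ordinaryHypergeometric_ofReal_ne_zero (a := 1/4) (b := 1/4) (c := 1/2)
      (by norm_num) (by norm_num) (by norm_num) (by norm_num) (by norm_num)
      (mem_ball_zero_iff.1 (hmaps ht))
    push_cast at this
    rwa [hyp2F1_eq_ordinaryHypergeometric]
  have hquad : DifferentiableOn ℂ (fun t : ℂ => 4 * t ^ 2) (Metric.ball 0 (1/2)) := by fun_prop
  have hnum := (differentiableOn_hyp2F1 (a := 3/4) (b := 3/4) (c := 3/2)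
    (by norm_num) (by norm_num) (by norm_num)).comp hquad hmaps
  have hdenom := (differentiableOn_hyp2F1 (a := 1/4) (b := 1/4) (c := 1/2)
    (by norm_num) (by norm_num) (by norm_num)).comp hquad hmaps
  exact ⟨hden, (differentiableOn_id.mul hnum).div hdenom hden, by simp [Ci]⟩
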